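/- The representation RMCR := MFCR ∪ MMCR exactly characterizes membership in MCR: for every pattern X ⊆ ℐ, X ∈ MCR if and only if there exist J ∈ RMCR and Z ∈ RMCR with J ⊆ X ⊆ Z. -/

import Mathlib

/-!
Every correlated rare pattern `X` has the same bond as a minimal subset `J ⊆ X` and as a maximal
superset `X ⊆ Z ⊆ I`. Since `bond X = Supp(∧X) / Supp(∨X)` with a decreasing numerator and an
increasing denominator, equal positive bonds along `J ⊆ X` force `Supp(∧J) ≤ Supp(∧X)`, so `J` is
still rare, and `Z` is rare because it is larger. Conversely, if `J ⊆ X ⊆ Z` with `J, Z`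
correlated rare, then `X` is rare like `J` and `bond X ≥ bond Z ≥ minbond`.
-/

open Finset

variable {τ ι : Type*} [DecidableEq ι]

/-- Conjunctive support: number of transactions containing the whole pattern. -/
def suppConj (T : Finset τ) (items : τ → Finset ι) (X : Finset ι) : ℕ :=
  (T.filter fun t => X ⊆ items t).card

/-- Disjunctive support: number of transactions containing at least one item of the pattern. -/
def suppDisj (T : Finset τ) (items : τ → Finset ι) (X : Finset ι) : ℕ :=
  (T.filter fun t => (X ∩ items t).Nonempty).card

/-- The bond measure (division by zero in `ℚ` yields `0`, matching the convention). -/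
def bond (T : Finset τ) (items : τ → Finset ι) (X : Finset ι) : ℚ :=
  (suppConj T items X : ℚ) / (suppDisj T items X : ℚ)

/-- Correlated rare patterns. -/
def MCR (T : Finset τ) (items : τ → Finset ι) (I : Finset ι) (minsupp : ℕ) (minbond : ℚ) :
    Set (Finset ι) :=
  {X | X ⊆ I ∧ minbond ≤ bond T items X ∧ suppConj T items X < minsupp}

/-- Closed correlated rare patterns: no strict superset (within the item set)
has the same bond value. -/
def MFCR (T : Finset τ) (items : τ → Finset ι) (I : Finset ι) (minsupp : ℕ) (minbond : ℚ) :
    Set (Finset ι) :=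
  {X | X ∈ MCR T items I minsupp minbond ∧
    ∀ Y : Finset ι, X ⊂ Y → Y ⊆ I → bond T items Y ≠ bond T items X}

/-- Minimal correlated rare patterns: no strict subset has the same bond value. -/
def MMCR (T : Finset τ) (items : τ → Finset ι) (I : Finset ι) (minsupp : ℕ) (minbond : ℚ) :
    Set (Finset ι) :=
  {X | X ∈ MCR T items I minsupp minbond ∧
    ∀ Y : Finset ι, Y ⊂ X → bond T items Y ≠ bond T items X}

/-- The exact concise representation `RMCR = MFCR ∪ MMCR`. -/
def RMCR (T : Finset τ) (items : τ → Finset ι) (I : Finset ι) (minsupp : ℕ) (minbond : ℚ) :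
    Set (Finset ι) :=
  MFCR T items I minsupp minbond ∪ MMCR T items I minsupp minbond

section ExtremalSets

variable {α β : Type*} (f : Finset α → β)

theorem Finset.exists_subset_forall_ssubset_ne (X : Finset α) :
    ∃ J ⊆ X, f J = f X ∧ ∀ Y ⊂ J, f Y ≠ f J := by
  obtain ⟨J, hJX, hJ⟩ := exists_minimal_le_of_wellFoundedLT (fun J => f J = f X) X rfl
  exact ⟨J, hJX, hJ.prop, fun Y hYJ hY => hJ.not_lt (hY.trans hJ.prop) hYJ⟩

theorem Finset.exists_superset_forall_ssuperset_ne {X I : Finset α} (hXI : X ⊆ I) :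
    ∃ Z, X ⊆ Z ∧ Z ⊆ I ∧ f Z = f X ∧ ∀ Y, Z ⊂ Y → Y ⊆ I → f Y ≠ f Z := by
  have hfin : {Z : Finset α | Z ⊆ I ∧ f Z = f X}.Finite :=
    I.powerset.finite_toSet.subset fun Z hZ => mem_powerset.2 hZ.1
  obtain ⟨Z, hXZ, hZ⟩ := hfin.exists_le_maximal ⟨hXI, rfl⟩
  exact ⟨Z, hXZ, hZ.prop.1, hZ.prop.2,
    fun Y hZY hYI hY => hZ.not_gt ⟨hYI, hY.trans hZ.prop.2⟩ hZY⟩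

end ExtremalSets

section Bond

variable {T : Finset τ} {items : τ → Finset ι} {X Y : Finset ι}

theorem suppConj_anti (h : X ⊆ Y) : suppConj T items Y ≤ suppConj T items X :=
  card_le_card <| monotone_filter_right T fun _ _ hY => h.trans hY

theorem suppDisj_mono (h : X ⊆ Y) : suppDisj T items X ≤ suppDisj T items Y :=
  card_le_card <| monotone_filter_right T fun _ _ hX => hX.mono (inter_subset_inter_right h)

theorem suppDisj_pos_of_bond_pos (h : 0 < bond T items X) : 0 < suppDisj T items X := by
  by_contra! h0
  simp [bond, Nat.le_zero.1 h0] at h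

theorem suppConj_eq_bond_mul (h : 0 < suppDisj T items X) :
    (suppConj T items X : ℚ) = bond T items X * suppDisj T items X :=
  (div_mul_cancel₀ _ (by exact_mod_cast h.ne')).symm

theorem bond_anti (h : X ⊆ Y) (hX : 0 < suppDisj T items X) :
    bond T items Y ≤ bond T items X := by
  have hY : 0 < suppDisj T items Y := hX.trans_le (suppDisj_mono h)
  unfold bond
  rw [div_le_div_iff₀ (by exact_mod_cast hY) (by exact_mod_cast hX)]
  exact_mod_cast Nat.mul_le_mul (suppConj_anti h) (suppDisj_mono h)

theorem suppConj_le_of_bond_eq (h : X ⊆ Y) (hpos : 0 < bond T items X)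
    (heq : bond T items X = bond T items Y) : suppConj T items X ≤ suppConj T items Y := by
  have hX := suppDisj_pos_of_bond_pos hpos
  have hY : 0 < suppDisj T items Y := hX.trans_le (suppDisj_mono h)
  have : (suppConj T items X : ℚ) ≤ suppConj T items Y := by
    rw [suppConj_eq_bond_mul hX, suppConj_eq_bond_mul hY, ← heq]
    exact mul_le_mul_of_nonneg_left (by exact_mod_cast suppDisj_mono h) hpos.le
  exact_mod_cast this

end Bond

section CorrelatedRare

variable {T : Finset τ} {items : τ → Finset ι} {I : Finset ι}
  {minsupp : ℕ} {minbond : ℚ} {J X Z : Finset ι}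

theorem RMCR_subset_MCR : RMCR T items I minsupp minbond ⊆ MCR T items I minsupp minbond :=
  fun _ h => h.elim (·.1) (·.1)

theorem mem_MCR_of_subset_of_bond_eq (hb0 : 0 < minbond) (hX : X ∈ MCR T items I minsupp minbond)
    (hJX : J ⊆ X) (hJ : bond T items J = bond T items X) : J ∈ MCR T items I minsupp minbond :=
  ⟨hJX.trans hX.1, hJ ▸ hX.2.1,
    (suppConj_le_of_bond_eq hJX (hb0.trans_le (hJ ▸ hX.2.1)) hJ).trans_lt hX.2.2⟩

theorem mem_MCR_of_superset_of_bond_eq (hX : X ∈ MCR T items I minsupp minbond) (hXZ : X ⊆ Z)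
    (hZI : Z ⊆ I) (hZ : bond T items Z = bond T items X) : Z ∈ MCR T items I minsupp minbond :=
  ⟨hZI, hZ ▸ hX.2.1, (suppConj_anti hXZ).trans_lt hX.2.2⟩

theorem mem_MCR_of_subset_of_subset (hb0 : 0 < minbond) (hJ : J ∈ MCR T items I minsupp minbond)
    (hZ : Z ∈ MCR T items I minsupp minbond) (hJX : J ⊆ X) (hXZ : X ⊆ Z) :
    X ∈ MCR T items I minsupp minbond := by
  have hX : 0 < suppDisj T items X :=
    (suppDisj_pos_of_bond_pos (hb0.trans_le hJ.2.1)).trans_le (suppDisj_mono hJX)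
  exact ⟨hXZ.trans hZ.1, hZ.2.1.trans (bond_anti hXZ hX), (suppConj_anti hJX).trans_lt hJ.2.2⟩

end CorrelatedRare

theorem stmt8_general (T : Finset τ) (items : τ → Finset ι) (I : Finset ι)
    (minsupp : ℕ) (minbond : ℚ)
    (hb0 : 0 < minbond)
    (X : Finset ι) :
    X ∈ MCR T items I minsupp minbond ↔
      ∃ J ∈ RMCR T items I minsupp minbond, ∃ Z ∈ RMCR T items I minsupp minbond,
        J ⊆ X ∧ X ⊆ Z := by
  constructor
  · intro hX
    obtain ⟨J, hJX, hJ, hJmin⟩ := exists_subset_forall_ssubset_ne (bond T items) X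
    obtain ⟨Z, hXZ, hZI, hZ, hZmax⟩ := exists_superset_forall_ssuperset_ne (bond T items) hX.1
    exact ⟨J, Or.inr ⟨mem_MCR_of_subset_of_bond_eq hb0 hX hJX hJ, hJmin⟩,
      Z, Or.inl ⟨mem_MCR_of_superset_of_bond_eq hX hXZ hZI hZ, hZmax⟩, hJX, hXZ⟩
  · rintro ⟨J, hJ, Z, hZ, hJX, hXZ⟩
    exact mem_MCR_of_subset_of_subset hb0 (RMCR_subset_MCR hJ) (RMCR_subset_MCR hZ) hJX hXZ

theorem stmt8 (T : Finset τ) (items : τ → Finset ι) (I : Finset ι)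
    (hitems : ∀ t ∈ T, items t ⊆ I)
    (minsupp : ℕ) (minbond : ℚ)
    (hs : 1 ≤ minsupp) (hb0 : 0 < minbond) (hb1 : minbond ≤ 1)
    (X : Finset ι) (hXI : X ⊆ I) :
    X ∈ MCR T items I minsupp minbond ↔
      ∃ J ∈ RMCR T items I minsupp minbond, ∃ Z ∈ RMCR T items I minsupp minbond,
        J ⊆ X ∧ X ⊆ Z :=
  stmt8_general T items I minsupp minbond hb0 X
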